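/- Assume condition (C3), i.e., r is antisymmetric. For all subsets I, J ⊆ K, one has J ~ I if and only if there exist H, W ⊆ K with J = H ∪ W, H_d ~ I_d, W_c ~ I_c, H_c = ∅ and W_d = ∅. -/
import Mathlib


variable {K : Type*}

/-- The equivalence relation `I ~ J` between subsets of `K`:
for every `i ∈ I` there is `j ∈ J` with `r i j`, and
for every `j ∈ J` there is `i ∈ I` with `r j i`. -/
def SetEquiv (r : K → K → Prop) (I J : Set K) : Prop :=
  (∀ i ∈ I, ∃ j ∈ J, r i j) ∧ (∀ j ∈ J, ∃ i ∈ I, r j i)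

/-- A subset `I ⊆ K` is primitive if for all distinct `i, j ∈ I`,
neither `r i j` nor `r j i` holds. -/
def Primitive (r : K → K → Prop) (I : Set K) : Prop :=
  ∀ i ∈ I, ∀ j ∈ I, i ≠ j → ¬ r i j ∧ ¬ r j i

/-- `I_M`: the set of maximal elements of `I`. -/
def partM (r : K → K → Prop) (I : Set K) : Set K :=
  {i | i ∈ I ∧ ∀ j ∈ I, j ≠ i → ¬ r i j}

/-- `I_d`: elements of `I` lying `r`-below a maximal element of `I`. -/
def partD (r : K → K → Prop) (I : Set K) : Set K :=
  {i | i ∈ I ∧ ∃ j ∈ partM r I, r i j}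

/-- `I_c := I \ I_d`. -/
def partC (r : K → K → Prop) (I : Set K) : Set K :=
  I \ partD r I

/-- `I⁺ := {i ∈ K : ∃ j ∈ I, r i j}`. -/
def plusSet (r : K → K → Prop) (I : Set K) : Set K :=
  {i | ∃ j ∈ I, r i j}

/-- The set of representatives of pure ascending chains. -/
def chainReps (r : K → K → Prop) : Set (Set K) :=
  {I | ∃ J : Set K, J = partC r J ∧ plusSet r J = I}

/-- `~` as a setoid on the power set of `K`. -/
def setEquivSetoid (r : K → K → Prop) (hrefl : ∀ i, r i i)
    (htrans : ∀ i j k, r i j → r j k → r i k) : Setoid (Set K) where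
  r := SetEquiv r
  iseqv := by
    constructor
    · intro I
      exact ⟨fun i hi => ⟨i, hi, hrefl i⟩, fun i hi => ⟨i, hi, hrefl i⟩⟩
    · intro I J h
      exact ⟨h.2, h.1⟩
    · intro I J L h1 h2
      constructor
      · intro i hi
        obtain ⟨j, hj, hij⟩ := h1.1 i hi
        obtain ⟨l, hl, hjl⟩ := h2.1 j hj
        exact ⟨l, hl, htrans i j l hij hjl⟩
      · intro l hl
        obtain ⟨j, hj, hlj⟩ := h2.2 l hl
        obtain ⟨i, hi, hji⟩ := h1.2 j hj
        exact ⟨i, hi, htrans l j i hlj hji⟩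

section Aux

variable (r : K → K → Prop)

lemma partD_subset' (I : Set K) : partD r I ⊆ I := fun _ hi => hi.1

lemma partM_subset' (I : Set K) : partM r I ⊆ I := fun _ hi => hi.1

lemma partM_subset_partD' (hrefl : ∀ i, r i i) (I : Set K) :
    partM r I ⊆ partD r I := fun i hi => ⟨hi.1, i, hi, hrefl i⟩

lemma setEquiv_symm {I J : Set K} (h : SetEquiv r I J) : SetEquiv r J I := ⟨h.2, h.1⟩

lemma partM_subset_of_equiv (htrans : ∀ i j k, r i j → r j k → r i k)
    (hanti : ∀ i j, r i j → r j i → i = j)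
    {I J : Set K} (h : SetEquiv r J I) : partM r J ⊆ partM r I := by
  rintro m ⟨hmJ, hmax⟩
  obtain ⟨a, haI, hma⟩ := h.1 m hmJ
  obtain ⟨b, hbJ, hab⟩ := h.2 a haI
  have hbm : b = m := by
    by_contra hne
    exact hmax b hbJ hne (htrans m a b hma hab)
  rw [hbm] at hab
  have ham : a = m := hanti a m hab hma
  rw [ham] at haI
  refine ⟨haI, fun c hcI hcm hmc => ?_⟩
  obtain ⟨b', hb'J, hcb'⟩ := h.2 c hcI
  have hb'm : b' = m := by
    by_contra hne
    exact hmax b' hb'J hne (htrans m c b' hmc hcb')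
  rw [hb'm] at hcb'
  exact hcm (hanti c m hcb' hmc)

lemma partM_eq_of_equiv (htrans : ∀ i j k, r i j → r j k → r i k)
    (hanti : ∀ i j, r i j → r j i → i = j)
    {I J : Set K} (h : SetEquiv r J I) : partM r J = partM r I :=
  Set.Subset.antisymm (partM_subset_of_equiv r htrans hanti h)
    (partM_subset_of_equiv r htrans hanti (setEquiv_symm r h))

lemma partD_equiv_of_equiv (hrefl : ∀ i, r i i)
    (htrans : ∀ i j k, r i j → r j k → r i k)
    (hanti : ∀ i j, r i j → r j i → i = j)
    {I J : Set K} (h : SetEquiv r J I) :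
    SetEquiv r (partD r J) (partD r I) := by
  have hM := partM_eq_of_equiv r htrans hanti h
  constructor
  · rintro i ⟨hiJ, m, hm, him⟩
    exact ⟨m, partM_subset_partD' r hrefl I (hM ▸ hm), him⟩
  · rintro j ⟨hjI, n, hn, hjn⟩
    exact ⟨n, partM_subset_partD' r hrefl J (hM ▸ hn), hjn⟩

lemma partC_equiv_of_equiv (htrans : ∀ i j k, r i j → r j k → r i k)
    (hanti : ∀ i j, r i j → r j i → i = j)
    {I J : Set K} (h : SetEquiv r J I) :
    SetEquiv r (partC r J) (partC r I) := by
  have hM := partM_eq_of_equiv r htrans hanti h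
  constructor
  · rintro i ⟨hiJ, hiD⟩
    obtain ⟨a, haI, hia⟩ := h.1 i hiJ
    refine ⟨a, ⟨haI, fun haD => ?_⟩, hia⟩
    obtain ⟨-, m, hm, ham⟩ := haD
    exact hiD ⟨hiJ, m, hM ▸ hm, htrans i a m hia ham⟩
  · rintro j ⟨hjI, hjD⟩
    obtain ⟨b, hbJ, hjb⟩ := h.2 j hjI
    refine ⟨b, ⟨hbJ, fun hbD => ?_⟩, hjb⟩
    obtain ⟨-, m, hm, hbm⟩ := hbD
    exact hjD ⟨hjI, m, hM ▸ hm, htrans j b m hjb hbm⟩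

lemma partM_partD (hrefl : ∀ i, r i i) (I : Set K) :
    partM r (partD r I) = partM r I := by
  ext i
  constructor
  · rintro ⟨⟨hiI, m, hm, him⟩, hmax⟩
    have hmD : m ∈ partD r I := partM_subset_partD' r hrefl I hm
    have : m = i := by
      by_contra hne
      exact hmax m hmD hne him
    exact this ▸ hm
  · rintro ⟨hiI, hmax⟩
    exact ⟨partM_subset_partD' r hrefl I ⟨hiI, hmax⟩,
      fun j hj hne => hmax j hj.1 hne⟩

lemma partD_partD (hrefl : ∀ i, r i i) (I : Set K) :
    partD r (partD r I) = partD r I := by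
  ext i
  constructor
  · exact fun hi => hi.1
  · rintro ⟨hiI, m, hm, him⟩
    exact ⟨⟨hiI, m, hm, him⟩, m, (partM_partD r hrefl I).symm ▸ hm, him⟩

lemma partC_partD_empty (hrefl : ∀ i, r i i) (I : Set K) :
    partC r (partD r I) = ∅ := by
  rw [partC, partD_partD r hrefl, Set.diff_self]

lemma partM_partC (hrefl : ∀ i, r i i)
    (htrans : ∀ i j k, r i j → r j k → r i k)
    (hanti : ∀ i j, r i j → r j i → i = j) (I : Set K) :
    partM r (partC r I) = ∅ := by
  ext i
  simp only [Set.mem_empty_iff_false, iff_false]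
  rintro ⟨⟨hiI, hiD⟩, hmax⟩
  apply hiD
  refine ⟨hiI, i, ⟨hiI, fun j hjI hne hij => ?_⟩, hrefl i⟩
  by_cases hjD : j ∈ partD r I
  · obtain ⟨-, m, hm, hjm⟩ := hjD
    have him : r i m := htrans i j m hij hjm
    by_cases hmi : m = i
    · rw [hmi] at hjm
      exact hne (hanti j i hjm hij)
    · exact hiD ⟨hiI, m, hm, him⟩
  · exact hmax j ⟨hjI, hjD⟩ hne hij

lemma partD_partC_empty (hrefl : ∀ i, r i i)
    (htrans : ∀ i j k, r i j → r j k → r i k)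
    (hanti : ∀ i j, r i j → r j i → i = j) (I : Set K) :
    partD r (partC r I) = ∅ := by
  ext i
  simp only [Set.mem_empty_iff_false, iff_false]
  rintro ⟨hi, m, hm, him⟩
  rw [partM_partC r hrefl htrans hanti] at hm
  exact hm

lemma partC_partC (hrefl : ∀ i, r i i)
    (htrans : ∀ i j k, r i j → r j k → r i k)
    (hanti : ∀ i j, r i j → r j i → i = j) (I : Set K) :
    partC r (partC r I) = partC r I := by
  rw [partC, partD_partC_empty r hrefl htrans hanti, Set.diff_empty]

lemma partD_union_partC (I : Set K) : partD r I ∪ partC r I = I :=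
  Set.union_diff_cancel (partD_subset' r I)

lemma setEquiv_union {A A' B B' : Set K}
    (h1 : SetEquiv r A A') (h2 : SetEquiv r B B') :
    SetEquiv r (A ∪ B) (A' ∪ B') := by
  constructor
  · rintro i (hi | hi)
    · obtain ⟨j, hj, hij⟩ := h1.1 i hi
      exact ⟨j, Or.inl hj, hij⟩
    · obtain ⟨j, hj, hij⟩ := h2.1 i hi
      exact ⟨j, Or.inr hj, hij⟩
  · rintro j (hj | hj)
    · obtain ⟨i, hi, hji⟩ := h1.2 j hj
      exact ⟨i, Or.inl hi, hji⟩
    · obtain ⟨i, hi, hji⟩ := h2.2 j hj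
      exact ⟨i, Or.inr hi, hji⟩

end Aux

theorem equiv_iff_union_decomposition (r : K → K → Prop)
    (hrefl : ∀ i, r i i) (htrans : ∀ i j k, r i j → r j k → r i k)
    (hanti : ∀ i j, r i j → r j i → i = j)
    (I J : Set K) :
    SetEquiv r J I ↔
      ∃ H W : Set K, J = H ∪ W ∧ SetEquiv r (partD r H) (partD r I) ∧
        SetEquiv r (partC r W) (partC r I) ∧ partC r H = ∅ ∧ partD r W = ∅ := by
  constructor
  · intro h
    refine ⟨partD r J, partC r J, (partD_union_partC r J).symm, ?_, ?_, ?_, ?_⟩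
    · rw [partD_partD r hrefl]
      exact partD_equiv_of_equiv r hrefl htrans hanti h
    · rw [partC_partC r hrefl htrans hanti]
      exact partC_equiv_of_equiv r htrans hanti h
    · exact partC_partD_empty r hrefl J
    · exact partD_partC_empty r hrefl htrans hanti J
  · rintro ⟨H, W, hJ, hHd, hWc, hHc, hWd⟩
    have hH : H = partD r H := by
      have : H \ partD r H = ∅ := hHc
      have hsub : H ⊆ partD r H := by
        intro x hx
        by_contra hxn
        exact absurd (this ▸ (Set.mem_diff x).2 ⟨hx, hxn⟩) (Set.notMem_empty x)
      exact Set.Subset.antisymm hsub (partD_subset' r H)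
    have hW : W = partC r W := by
      rw [partC, hWd, Set.diff_empty]
    rw [hJ, hH, hW, ← partD_union_partC r I]
    exact setEquiv_union r hHd hWc
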